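/- arXiv:2308.08266 — 6 statements merged into one kernel-verified Lean document; each statement's English description precedes it below -/
import Mathlib

section
/- Define 𝒟_{m,n} = ∫_{−1}^{1} x² p_m(x) p_n(x) dx, where p_n(x) = √(n + 1/2) · P_n(x) are the orthonormal Legendre polynomials. Then for every n ∈ ℕ, 𝒟_{n+2,n} = 𝒟_{n,n+2} = (n+1)(n+2)/((2n+3)√((2n+1)(2n+5))). -/
/-!
Write `P_m = (2ᵐ m!)⁻¹ Dᵐ W_m` with `W_m = (x² − 1)ᵐ`. The derivatives of `W_m` of order `< m`
vanish at `±1`, so `m` integrations by parts move `Dᵐ` onto the other factor: for a polynomial `f`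
of degree `≤ m` with coefficient `f_m` of `xᵐ`,
`∫ P_m f = (2ᵐ m!)⁻¹ (-1)ᵐ m! f_m ∫ W_m = f_m · 2ᵐ⁺¹ (m!)² / (2m+1)!`,
the Wallis integral `∫ W_m` being computed from the recursion given by `d/dx (x W_{m+1})`.
For `m = n + 2` and `f = x² P_n`, `f_m` is the leading coefficient `(2n)! / (2ⁿ (n!)²)` of `P_n`, so
`∫ x² P_{n+2} P_n = 2(n+1)(n+2) / ((2n+1)(2n+3)(2n+5))`; the normalisations `√(n + 1/2)` then
combine to the claimed value.
-/

/-- The Legendre polynomial via the Rodrigues formula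
`P_n(x) = (1/(2^n n!)) dⁿ/dxⁿ (x² − 1)ⁿ`. -/
noncomputable def legendreP (n : ℕ) (x : ℝ) : ℝ :=
  (1 / ((2 : ℝ) ^ n * Nat.factorial n)) * iteratedDeriv n (fun y : ℝ => (y ^ 2 - 1) ^ n) x

/-- The orthonormal Legendre polynomials `p_n(x) = √(n + 1/2)·P_n(x)`. -/
noncomputable def pLeg (n : ℕ) (x : ℝ) : ℝ :=
  Real.sqrt ((n : ℝ) + 1 / 2) * legendreP n x

/-- `𝒟_{m,n} = ∫_{−1}^{1} x² p_m(x) p_n(x) dx`. -/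
noncomputable def Dleg (m n : ℕ) : ℝ :=
  ∫ x in (-1 : ℝ)..1, x ^ 2 * pLeg m x * pLeg n x

open Polynomial intervalIntegral Nat

namespace Polynomial

theorem iteratedDeriv_eval {𝕜 : Type*} [NontriviallyNormedField 𝕜] (p : 𝕜[X]) (k : ℕ) :
    iteratedDeriv k (fun x => p.eval x) = fun x => (derivative^[k] p).eval x := by
  induction k generalizing p with
  | zero => simp
  | succ k ih =>
    rw [iteratedDeriv_succ', Function.iterate_succ_apply, ← ih]
    congr 1
    funext x
    exact p.deriv

theorem eval_iterate_derivative_of_natDegree_le {R : Type*} [CommSemiring R] {p : R[X]} {k : ℕ}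
    (hp : p.natDegree ≤ k) (x : R) : (derivative^[k] p).eval x = k ! * p.coeff k := by
  have hconst : (derivative^[k] p).natDegree = 0 :=
    Nat.eq_zero_of_le_zero ((natDegree_iterate_derivative p k).trans (by omega))
  rw [eq_C_of_natDegree_eq_zero hconst, eval_C, coeff_iterate_derivative, zero_add,
    descFactorial_self, nsmul_eq_mul]

theorem isRoot_iterate_derivative_X_sq_sub_one_pow {R : Type*} [CommRing R] {n j : ℕ}
    (hj : j < n) {x : R} (hx : x ^ 2 = 1) : (derivative^[j] ((X ^ 2 - 1) ^ n : R[X])).IsRoot x := by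
  obtain ⟨r, hr⟩ := pow_sub_dvd_iterate_derivative_pow (X ^ 2 - 1 : R[X]) n j
  simp [IsRoot, hr, hx, zero_pow (Nat.sub_ne_zero_of_lt hj)]

theorem integral_derivative_mul_eval {a b : ℝ} {p : ℝ[X]} (ha : p.IsRoot a) (hb : p.IsRoot b)
    (q : ℝ[X]) :
    ∫ x in a..b, (derivative p).eval x * q.eval x =
      -∫ x in a..b, p.eval x * (derivative q).eval x := by
  have := integral_mul_deriv_eq_deriv_mul (fun x _ => p.hasDerivAt x) (fun x _ => q.hasDerivAt x)
    ((derivative p).continuous.intervalIntegrable a b)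
    ((derivative q).continuous.intervalIntegrable a b)
  rw [ha.eq_zero, hb.eq_zero] at this
  linarith

theorem integral_iterate_derivative_mul_eval {a b : ℝ} {p : ℝ[X]} {k : ℕ}
    (hroots : ∀ j < k, (derivative^[j] p).IsRoot a ∧ (derivative^[j] p).IsRoot b) (q : ℝ[X]) :
    ∫ x in a..b, (derivative^[k] p).eval x * q.eval x =
      (-1) ^ k * ∫ x in a..b, p.eval x * (derivative^[k] q).eval x := by
  induction k generalizing p with
  | zero => simp
  | succ k ih =>
    have hroots' : ∀ j < k, (derivative^[j] (derivative p)).IsRoot a ∧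
        (derivative^[j] (derivative p)).IsRoot b := fun j hj => by
      simpa only [← Function.iterate_succ_apply] using hroots (j + 1) (by omega)
    obtain ⟨ha, hb⟩ : p.IsRoot a ∧ p.IsRoot b := hroots 0 k.succ_pos
    rw [Function.iterate_succ_apply, ih hroots', integral_derivative_mul_eval ha hb,
      ← Function.iterate_succ_apply' derivative k q]
    ring

end Polynomial

theorem integral_sq_sub_one_pow_succ (n : ℕ) :
    (2 * (n : ℝ) + 3) * ∫ x in (-1 : ℝ)..1, (x ^ 2 - 1) ^ (n + 1) =
      -(2 * (n : ℝ) + 2) * ∫ x in (-1 : ℝ)..1, (x ^ 2 - 1) ^ n := by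
  have hderiv : ∀ x : ℝ, HasDerivAt (fun x => x * (x ^ 2 - 1) ^ (n + 1))
      ((2 * n + 3) * (x ^ 2 - 1) ^ (n + 1) + (2 * n + 2) * (x ^ 2 - 1) ^ n) x := fun x => by
    refine ((hasDerivAt_id' x).fun_mul
      (((hasDerivAt_pow 2 x).sub_const 1).fun_pow (n + 1))).congr_deriv ?_
    rw [Nat.add_sub_cancel]
    push_cast
    ring
  have hint := integral_eq_sub_of_hasDerivAt (fun x _ => hderiv x)
    (Continuous.intervalIntegrable (by fun_prop) (-1) 1)
  rw [integral_add (Continuous.intervalIntegrable (by fun_prop) _ _)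
    (Continuous.intervalIntegrable (by fun_prop) _ _), integral_const_mul, integral_const_mul] at hint
  norm_num at hint
  linarith

theorem integral_sq_sub_one_pow (n : ℕ) :
    ∫ x in (-1 : ℝ)..1, (x ^ 2 - 1) ^ n =
      (-1 : ℝ) ^ n * 2 ^ (2 * n + 1) * n ! ^ 2 / (2 * n + 1)! := by
  induction n with
  | zero => norm_num
  | succ n ih =>
    have hrec := integral_sq_sub_one_pow_succ n
    rw [ih] at hrec
    have hfac : ((2 * (n + 1) + 1)! : ℝ) = (2 * n + 3) * (2 * n + 2) * (2 * n + 1)! := by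
      rw [show 2 * (n + 1) + 1 = 2 * n + 1 + 1 + 1 by ring, factorial_succ, factorial_succ]
      push_cast
      ring
    rw [hfac, factorial_succ, eq_div_iff (by positivity)]
    field_simp at hrec
    push_cast
    linear_combination (2 * (n : ℝ) + 2) * hrec

noncomputable def legendre (n : ℕ) : ℝ[X] :=
  C (1 / ((2 : ℝ) ^ n * n !)) * derivative^[n] ((X ^ 2 - 1 : ℝ[X]) ^ n)

theorem legendreP_eq_eval_legendre (n : ℕ) (x : ℝ) : legendreP n x = (legendre n).eval x := by
  have hpoly : (fun y : ℝ => (y ^ 2 - 1) ^ n) = fun y => ((X ^ 2 - 1 : ℝ[X]) ^ n).eval y := by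
    simp
  rw [legendreP, hpoly, iteratedDeriv_eval, legendre, eval_mul, eval_C]

theorem natDegree_X_sq_sub_one_pow {R : Type*} [CommRing R] [Nontrivial R] (n : ℕ) :
    ((X ^ 2 - 1 : R[X]) ^ n).natDegree = 2 * n := by
  have hmonic : (X ^ 2 - 1 : R[X]).Monic := by simpa using monic_X_pow_sub_C (1 : R) two_ne_zero
  rw [hmonic.natDegree_pow, ← C_1, natDegree_X_pow_sub_C, mul_comm]

theorem natDegree_legendre_le (n : ℕ) : (legendre n).natDegree ≤ n := by
  refine (natDegree_C_mul_le _ _).trans ((natDegree_iterate_derivative _ n).trans ?_)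
  rw [natDegree_X_sq_sub_one_pow]
  omega

theorem coeff_legendre_self (n : ℕ) : (legendre n).coeff n = (2 * n)! / (2 ^ n * n ! ^ 2) := by
  have hfac : (n ! : ℝ) * (2 * n).descFactorial n = (2 * n)! := by
    have := Nat.factorial_mul_descFactorial (show n ≤ 2 * n by omega)
    rw [show 2 * n - n = n by omega] at this
    exact_mod_cast this
  have hlead : ((X ^ 2 - 1 : ℝ[X]) ^ n).leadingCoeff = 1 := by simp
  rw [leadingCoeff, natDegree_X_sq_sub_one_pow] at hlead
  rw [legendre, coeff_C_mul, coeff_iterate_derivative, ← two_mul, hlead, nsmul_one, ← hfac]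
  field_simp

theorem integral_legendre_mul_eval {m : ℕ} {f : ℝ[X]} (hf : f.natDegree ≤ m) :
    ∫ x in (-1 : ℝ)..1, (legendre m).eval x * f.eval x =
      f.coeff m * (2 ^ (m + 1) * m ! ^ 2 / (2 * m + 1)!) := by
  have hroots : ∀ j < m, (derivative^[j] ((X ^ 2 - 1 : ℝ[X]) ^ m)).IsRoot (-1) ∧
      (derivative^[j] ((X ^ 2 - 1 : ℝ[X]) ^ m)).IsRoot 1 := fun j hj =>
    ⟨isRoot_iterate_derivative_X_sq_sub_one_pow hj (by norm_num),
      isRoot_iterate_derivative_X_sq_sub_one_pow hj (by norm_num)⟩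
  simp only [legendre, eval_mul, eval_C, mul_assoc]
  rw [integral_const_mul, integral_iterate_derivative_mul_eval hroots]
  simp only [eval_iterate_derivative_of_natDegree_le hf, eval_pow, eval_sub, eval_X, eval_one]
  rw [integral_mul_const, integral_sq_sub_one_pow]
  have hsign : (-1 : ℝ) ^ m * (-1) ^ m = 1 := by rw [← mul_pow]; norm_num
  field_simp
  linear_combination f.coeff m * 2 ^ (2 * m + 1) * hsign

theorem integral_sq_mul_legendre_add_two_mul_legendre (n : ℕ) :
    ∫ x in (-1 : ℝ)..1, x ^ 2 * (legendre (n + 2)).eval x * (legendre n).eval x =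
      2 * (n + 1) * (n + 2) / ((2 * n + 1) * (2 * n + 3) * (2 * n + 5)) := by
  have hdeg : (X ^ 2 * legendre n).natDegree ≤ n + 2 :=
    natDegree_mul_le.trans (by linarith [natDegree_X_pow_le (R := ℝ) 2, natDegree_legendre_le n])
  have hcoeff : (X ^ 2 * legendre n).coeff (n + 2) = (legendre n).coeff n := coeff_X_pow_mul _ _ _
  have hfac : ((2 * (n + 2) + 1)! : ℝ) =
      (2 * n + 5) * (2 * n + 4) * (2 * n + 3) * (2 * n + 2) * (2 * n + 1) * (2 * n)! := by
    rw [show 2 * (n + 2) + 1 = 2 * n + 1 + 1 + 1 + 1 + 1 by ring]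
    simp only [factorial_succ]
    push_cast
    ring
  calc _ = ∫ x in (-1 : ℝ)..1, (legendre (n + 2)).eval x * (X ^ 2 * legendre n).eval x := by
        simp only [eval_mul, eval_pow, eval_X, mul_left_comm, mul_assoc]
    _ = _ := by
      rw [integral_legendre_mul_eval hdeg, hcoeff, coeff_legendre_self, hfac]
      simp only [factorial_succ]
      push_cast
      field_simp
      ring

theorem Dleg_comm (m n : ℕ) : Dleg m n = Dleg n m := by
  simp only [Dleg, mul_right_comm]

theorem Dleg_eq_integral_legendre (m n : ℕ) :
    Dleg m n = √((m : ℝ) + 1 / 2) * √((n : ℝ) + 1 / 2) *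
      ∫ x in (-1 : ℝ)..1, x ^ 2 * (legendre m).eval x * (legendre n).eval x := by
  rw [Dleg, ← integral_const_mul]
  simp only [pLeg, legendreP_eq_eval_legendre]
  congr 1
  funext x
  ring

theorem sqrt_add_two_add_half_mul_sqrt_add_half (n : ℕ) :
    √(((n + 2 : ℕ) : ℝ) + 1 / 2) * √((n : ℝ) + 1 / 2) = √((2 * n + 1) * (2 * n + 5)) / 2 := by
  rw [← Real.sqrt_mul (by positivity), eq_div_iff two_ne_zero,
    ← Real.sqrt_sq (zero_le_two : (0 : ℝ) ≤ 2), ← Real.sqrt_mul (by positivity)]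
  congr 1
  push_cast
  ring

/-- `𝒟_{n+2,n} = 𝒟_{n,n+2} = (n+1)(n+2)/((2n+3)√((2n+1)(2n+5)))` for all `n ∈ ℕ`. -/
theorem Dleg_offdiag (n : ℕ) :
    Dleg (n + 2) n = ((n : ℝ) + 1) * (n + 2) /
        ((2 * (n : ℝ) + 3) * Real.sqrt ((2 * n + 1) * (2 * n + 5))) ∧
    Dleg n (n + 2) = ((n : ℝ) + 1) * (n + 2) /
        ((2 * (n : ℝ) + 3) * Real.sqrt ((2 * n + 1) * (2 * n + 5))) := by
  have hsq : √((2 * n + 1) * (2 * n + 5) : ℝ) ^ 2 = (2 * n + 1) * (2 * n + 5) :=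
    Real.sq_sqrt (by positivity)
  have hD : Dleg (n + 2) n = ((n : ℝ) + 1) * (n + 2) /
      ((2 * (n : ℝ) + 3) * Real.sqrt ((2 * n + 1) * (2 * n + 5))) := by
    rw [Dleg_eq_integral_legendre, sqrt_add_two_add_half_mul_sqrt_add_half,
      integral_sq_mul_legendre_add_two_mul_legendre]
    field_simp
    rw [hsq]
  exact ⟨hD, (Dleg_comm _ _).trans hD⟩
end

section
/- Let α > −1 and β > 0, and let m ∈ ℕ. Then ∫_0^∞ L_m^{(α)}(x) x^β e^{−x} dx = Γ(1+β) · (α − β)_m / m!, where (z)_k = z(z+1)⋯(z+k−1) is the Pochhammer symbol. -/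
/-- The generalized Laguerre polynomial
`L_n^{(α)}(x) = ∑_{k=0}^{n} (−1)^k (Γ(n+α+1)/(Γ(k+α+1)(n−k)! k!)) x^k`. -/
noncomputable def laguerreL (α : ℝ) (n : ℕ) (x : ℝ) : ℝ :=
  ∑ k ∈ Finset.range (n + 1),
    (-1 : ℝ) ^ k * (Real.Gamma ((n : ℝ) + α + 1) /
      (Real.Gamma ((k : ℝ) + α + 1) * (Nat.factorial (n - k)) * (Nat.factorial k))) * x ^ k

open MeasureTheory

/-!
Expanding the Laguerre polynomial termwise, each monomial integrates against `x ^ β * exp (-x)`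
to a Gamma value, and the integral becomes
`Γ(m+α+1)/m! · ∑ₖ (-1)ᵏ C(m,k) Γ(β+1+k)/Γ(α+1+k)`.
This alternating sum is `(-1)ᵐ` times the `m`-th forward difference at `0` of
`k ↦ Γ(b+k)/Γ(a+k)` (`a = α+1`, `b = β+1`). One difference replaces `a` by `a+1` and contributes
the factor `b - a`, so the `m`-th difference is the falling factorial of `b - a` times
`Γ(b+k)/Γ(a+m+k)`, and `(-1)ᵐ (b-a)(b-a-1)⋯(b-a-m+1) = (α-β)ₘ`.
-/

open Finset Real Set fwdDiff Polynomial

theorem sum_neg_one_pow_mul_choose_mul_eq_fwdDiff_iter {R : Type*} [CommRing R] (f : ℕ → R) (n : ℕ) :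
    ∑ k ∈ range (n + 1), (-1) ^ k * n.choose k * f k = (-1) ^ n * Δ_[1] ^[n] f 0 := by
  rw [fwdDiff_iter_eq_sum_shift, mul_sum]
  refine sum_congr rfl fun k hk => ?_
  obtain ⟨j, rfl⟩ := Nat.exists_eq_add_of_le (Nat.lt_succ_iff.mp (mem_range.mp hk))
  simp only [zsmul_eq_mul, Nat.add_sub_cancel_left, smul_eq_mul, mul_one, zero_add]
  push_cast
  have hsq : ((-1 : R) ^ j) ^ 2 = 1 := by rw [← pow_mul, mul_comm, pow_mul, neg_one_sq, one_pow]
  linear_combination (-(-1 : R) ^ k * (k + j).choose k * f k) * hsq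

noncomputable def gammaRatio (a b : ℝ) (k : ℕ) : ℝ := Gamma (b + k) / Gamma (a + k)

theorem fwdDiff_gammaRatio {a b : ℝ} (ha : 0 < a) (hb : 0 < b) :
    Δ_[1] (gammaRatio a b) = (b - a) • gammaRatio (a + 1) b := by
  ext k
  have hak : 0 < a + k := by positivity
  have hbk : 0 < b + k := by positivity
  simp only [fwdDiff, gammaRatio, Pi.smul_apply, smul_eq_mul, Nat.cast_add, Nat.cast_one]
  rw [← add_assoc, ← add_assoc, Gamma_add_one hak.ne', Gamma_add_one hbk.ne', add_right_comm a 1,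
    Gamma_add_one hak.ne']
  have := (Gamma_pos_of_pos hak).ne'
  field_simp
  ring

theorem fwdDiff_iter_gammaRatio {a b : ℝ} (ha : 0 < a) (hb : 0 < b) (n : ℕ) :
    Δ_[1] ^[n] (gammaRatio a b) = (descPochhammer ℝ n).eval (b - a) • gammaRatio (a + n) b := by
  induction n generalizing a with
  | zero => simp
  | succ n ih =>
    rw [Function.iterate_succ_apply, fwdDiff_gammaRatio ha hb, fwdDiff_iter_const_smul,
      ih (by positivity), smul_smul, descPochhammer_succ_left]
    simp only [eval_mul, eval_X, eval_comp, eval_sub, eval_one]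
    push_cast
    ring_nf

theorem sum_neg_one_pow_mul_choose_mul_gammaRatio {a b : ℝ} (ha : 0 < a) (hb : 0 < b) (n : ℕ) :
    ∑ k ∈ range (n + 1), (-1) ^ k * n.choose k * gammaRatio a b k
      = (ascPochhammer ℝ n).eval (a - b) * Gamma b / Gamma (a + n) := by
  rw [sum_neg_one_pow_mul_choose_mul_eq_fwdDiff_iter, fwdDiff_iter_gammaRatio ha hb, ← neg_sub b a,
    ascPochhammer_eval_neg_eq_descPochhammer]
  simp [gammaRatio, mul_div_assoc, mul_assoc]

theorem pow_mul_rpow_mul_exp_neg_eqOn (k : ℕ) (β : ℝ) :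
    EqOn (fun x : ℝ => x ^ k * x ^ β * exp (-x)) (fun x => exp (-x) * x ^ (β + 1 + k - 1))
      (Ioi 0) := by
  intro x hx
  simp only
  rw [show β + 1 + k - 1 = k + β by ring, rpow_add hx, rpow_natCast]
  ring

theorem integrableOn_pow_mul_rpow_mul_exp_neg (k : ℕ) {β : ℝ} (hβ : -1 < β) :
    IntegrableOn (fun x : ℝ => x ^ k * x ^ β * exp (-x)) (Ioi 0) :=
  (integrableOn_congr_fun (pow_mul_rpow_mul_exp_neg_eqOn k β) measurableSet_Ioi).mpr
    (GammaIntegral_convergent (add_pos_of_pos_of_nonneg (by linarith) k.cast_nonneg))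

theorem integral_pow_mul_rpow_mul_exp_neg (k : ℕ) {β : ℝ} (hβ : -1 < β) :
    ∫ x in Ioi 0, x ^ k * x ^ β * exp (-x) = Gamma (β + 1 + k) := by
  rw [setIntegral_congr_fun measurableSet_Ioi (pow_mul_rpow_mul_exp_neg_eqOn k β),
    Gamma_eq_integral (add_pos_of_pos_of_nonneg (by linarith) k.cast_nonneg)]

theorem integral_sum_pow_mul_rpow_mul_exp_neg (c : ℕ → ℝ) (n : ℕ) {β : ℝ} (hβ : -1 < β) :
    ∫ x in Ioi 0, (∑ k ∈ range n, c k * x ^ k) * x ^ β * exp (-x)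
      = ∑ k ∈ range n, c k * Gamma (β + 1 + k) := by
  have hsum : ∀ x : ℝ, (∑ k ∈ range n, c k * x ^ k) * x ^ β * exp (-x)
      = ∑ k ∈ range n, c k * (x ^ k * x ^ β * exp (-x)) := fun x => by
    simp only [sum_mul, mul_assoc]
  simp_rw [hsum]
  rw [integral_finsetSum _ fun k _ => (integrableOn_pow_mul_rpow_mul_exp_neg k hβ).const_mul _]
  simp_rw [integral_const_mul, integral_pow_mul_rpow_mul_exp_neg _ hβ]

theorem laguerreL_coeff_eq_choose_div (α : ℝ) {n k : ℕ} (hk : k ≤ n) :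
    (-1 : ℝ) ^ k * (Gamma ((n : ℝ) + α + 1) /
      (Gamma ((k : ℝ) + α + 1) * (Nat.factorial (n - k)) * (Nat.factorial k)))
      = Gamma (α + 1 + n) / n.factorial * ((-1) ^ k * n.choose k / Gamma (α + 1 + k)) := by
  rw [Nat.cast_choose ℝ hk]
  field_simp
  ring_nf

/-- For `α > −1`, `β > 0` and `m ∈ ℕ`:
`∫_0^∞ L_m^{(α)}(x) x^β e^{−x} dx = Γ(1+β)·(α−β)_m / m!`, where `(z)_k` is the
Pochhammer symbol `z(z+1)⋯(z+k−1)`. -/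
theorem laguerre_weighted_integral (α β : ℝ) (hα : -1 < α) (hβ : 0 < β) (m : ℕ) :
    ∫ x in Set.Ioi (0 : ℝ), laguerreL α m x * x ^ β * Real.exp (-x)
      = Real.Gamma (1 + β) * (ascPochhammer ℝ m).eval (α - β) / Nat.factorial m := by
  have hα1 : 0 < α + 1 := by linarith
  have hβ1 : 0 < β + 1 := by linarith
  unfold laguerreL
  rw [integral_sum_pow_mul_rpow_mul_exp_neg _ _ (by linarith)]
  calc _ = Gamma (α + 1 + m) / m.factorial *
        ∑ k ∈ range (m + 1), (-1) ^ k * m.choose k * gammaRatio (α + 1) (β + 1) k := by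
        rw [mul_sum]
        refine sum_congr rfl fun k hk => ?_
        rw [laguerreL_coeff_eq_choose_div α (Nat.lt_succ_iff.mp (mem_range.mp hk)), gammaRatio]
        ring
    _ = Gamma (α + 1 + m) / m.factorial *
        ((ascPochhammer ℝ m).eval (α - β) * Gamma (β + 1) / Gamma (α + 1 + m)) := by
        rw [sum_neg_one_pow_mul_choose_mul_gammaRatio hα1 hβ1, add_sub_add_right_eq_sub]
    _ = _ := by
        have := (Gamma_pos_of_pos (add_pos_of_pos_of_nonneg hα1 m.cast_nonneg)).ne'
        rw [add_comm 1 β]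
        field_simp
end

section
/- Let α, β > 0 and define the Laguerre–Laguerre connection coefficients 𝒟_{m,n} = ∫_0^∞ L̃_m^{(α)}(x) L̃_n^{(β)}(x) x^β e^{−x} dx, where L̃_n^{(γ)}(x) = (−1)^n √(n!/Γ(n+γ+1)) L_n^{(γ)}(x) are the orthonormal generalized Laguerre polynomials. Then for all integers 0 ≤ n ≤ m: 𝒟_{m,n} = (−1)^{m−n} ((α − β)_{m−n}/(m−n)!) · √( m! Γ(n+1+β) / (n! Γ(m+1+α)) ), where (z)_k = z(z+1)⋯(z+k−1) is the Pochhammer symbol. -/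
/-!
Expanding both polynomials turns the integral into a double sum of values
`∫₀^∞ x^(β+k+j) e^(-x) dx = Γ(β+k+j+1)`. Both remaining sums are Chu–Vandermonde sums
`∑ₛ (-1)^s C(M,s) Γ(a+s)/Γ(b+s) = Γ(a) (b-a)_M / Γ(b+M)`, i.e. `M`-th forward differences
of `s ↦ Γ(a+s)/Γ(b+s)`. Summing over the coefficients of `L_n^(β)` gives the moments
`∫ x^k L_n^(β)(x) x^β e^(-x) dx = (-1)^n k(k-1)⋯(k-n+1) Γ(β+k+1)/n!`, which vanish for
`k < n`; in the sum over the coefficients of `L_m^(α)` only `k ≥ n` survive, and it produces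
`(α-β)_(m-n)`.
-/
open MeasureTheory

/-- The orthonormal generalized Laguerre polynomials
`L̃_n^{(γ)}(x) = (−1)^n √(n!/Γ(n+γ+1)) L_n^{(γ)}(x)`. -/
noncomputable def laguerreTilde (γ : ℝ) (n : ℕ) (x : ℝ) : ℝ :=
  (-1 : ℝ) ^ n * Real.sqrt ((Nat.factorial n : ℝ) / Real.Gamma ((n : ℝ) + γ + 1)) *
    laguerreL γ n x

/-- The Laguerre–Laguerre connection coefficients
`𝒟_{m,n} = ∫_0^∞ L̃_m^{(α)}(x) L̃_n^{(β)}(x) x^β e^{−x} dx`. -/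
noncomputable def DLag (α β : ℝ) (m n : ℕ) : ℝ :=
  ∫ x in Set.Ioi (0 : ℝ), laguerreTilde α m x * laguerreTilde β n x * x ^ β * Real.exp (-x)

open Finset Real fwdDiff

theorem fwdDiff_iter_Gamma_div_Gamma {a b : ℝ} (ha : 0 < a) (hb : 0 < b) (M : ℕ) :
    (Δ_[1])^[M] (fun s : ℕ => Gamma (a + s) / Gamma (b + s)) =
      fun s : ℕ => (descPochhammer ℝ M).eval (a - b) * (Gamma (a + s) / Gamma (b + M + s)) := by
  induction M with
  | zero => simp
  | succ M ih =>
    ext s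
    have has : a + s ≠ 0 := by positivity
    have hbs : b + M + s ≠ 0 := by positivity
    rw [Function.iterate_succ_apply', ih, fwdDiff, descPochhammer_succ_eval]
    push_cast
    rw [← add_assoc, ← add_assoc, Gamma_add_one has, Gamma_add_one hbs,
      show b + (M + 1) + s = b + M + s + 1 by ring, Gamma_add_one hbs]
    have := (Gamma_pos_of_pos (show 0 < b + M + s by positivity)).ne'
    field_simp
    ring

theorem sum_neg_one_pow_mul_choose_mul_Gamma_div_Gamma {a b : ℝ} (ha : 0 < a) (hb : 0 < b)
    (M : ℕ) :
    ∑ s ∈ range (M + 1), (-1) ^ s * (M.choose s : ℝ) * (Gamma (a + s) / Gamma (b + s)) =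
      Gamma a * (ascPochhammer ℝ M).eval (b - a) / Gamma (b + M) := by
  have newton := fwdDiff_iter_eq_sum_shift 1 (fun s : ℕ => Gamma (a + s) / Gamma (b + s)) M 0
  rw [fwdDiff_iter_Gamma_div_Gamma ha hb] at newton
  simp only [Nat.cast_zero, add_zero, zero_add, nsmul_eq_mul, mul_one, zsmul_eq_mul] at newton
  rw [← neg_sub a b, ascPochhammer_eval_neg_eq_descPochhammer,
    show ∀ x y z : ℝ, Gamma a * (x * y) / z = x * (y * (Gamma a / z)) by intros; ring,
    newton, mul_sum]
  refine sum_congr rfl fun s hs => ?_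
  obtain ⟨t, rfl⟩ := Nat.exists_eq_add_of_le (mem_range_succ_iff.mp hs)
  push_cast
  rw [Nat.add_sub_cancel_left, pow_add]
  ring_nf
  rw [Even.neg_one_pow (⟨t, by ring⟩ : Even (t * 2)), mul_one]

theorem integral_sum_mul_pow_mul_rpow_mul_exp_neg {ι : Type*} (s : Finset ι) (c : ι → ℝ)
    (e : ι → ℕ) {γ : ℝ} (hγ : -1 < γ) :
    ∫ x in Set.Ioi 0, (∑ i ∈ s, c i * x ^ e i) * x ^ γ * exp (-x) =
      ∑ i ∈ s, c i * Gamma (γ + e i + 1) := by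
  have hpos : ∀ i, 0 < γ + e i + 1 := fun i => by linarith [(e i).cast_nonneg (α := ℝ)]
  have hpoint : Set.EqOn (fun x => (∑ i ∈ s, c i * x ^ e i) * x ^ γ * exp (-x))
      (fun x => ∑ i ∈ s, c i * (exp (-x) * x ^ (γ + e i + 1 - 1))) (Set.Ioi 0) := by
    intro x (hx : 0 < x)
    simp only [sum_mul]
    refine sum_congr rfl fun i _ => ?_
    rw [add_sub_cancel_right, rpow_add hx, rpow_natCast]
    ring
  rw [setIntegral_congr_fun measurableSet_Ioi hpoint,
    integral_finsetSum _ fun i _ => (GammaIntegral_convergent (hpos i)).const_mul (c i)]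
  refine sum_congr rfl fun i _ => ?_
  rw [integral_const_mul, ← Gamma_eq_integral (hpos i)]

noncomputable def laguerreCoeff (γ : ℝ) (n k : ℕ) : ℝ :=
  (-1) ^ k * (Gamma (n + γ + 1) / (Gamma (k + γ + 1) * (n - k).factorial * k.factorial))

theorem laguerreL_eq_sum (γ : ℝ) (n : ℕ) (x : ℝ) :
    laguerreL γ n x = ∑ k ∈ range (n + 1), laguerreCoeff γ n k * x ^ k := rfl

theorem laguerreCoeff_eq_choose (γ : ℝ) {n k : ℕ} (hk : k ≤ n) :
    laguerreCoeff γ n k =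
      (-1) ^ k * n.choose k * Gamma (n + γ + 1) / (n.factorial * Gamma (k + γ + 1)) := by
  have hfac : (n.choose k : ℝ) * k.factorial * (n - k).factorial = n.factorial := by
    exact_mod_cast Nat.choose_mul_factorial_mul_factorial hk
  have : (n.choose k : ℝ) ≠ 0 := by exact_mod_cast (Nat.choose_pos hk).ne'
  rw [laguerreCoeff, ← hfac]
  field_simp

/-- These are the moments `∫₀^∞ x^k L_n^(γ)(x) x^γ e^(-x) dx`. -/
theorem sum_laguerreCoeff_mul_Gamma {γ : ℝ} (hγ : -1 < γ) (n k : ℕ) :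
    ∑ j ∈ range (n + 1), laguerreCoeff γ n j * Gamma (γ + (k + j : ℕ) + 1) =
      (-1) ^ n * k.descFactorial n * Gamma (γ + k + 1) / n.factorial := by
  have hterm : ∀ j ∈ range (n + 1), laguerreCoeff γ n j * Gamma (γ + (k + j : ℕ) + 1) =
      Gamma (n + γ + 1) / n.factorial *
        ((-1) ^ j * n.choose j * (Gamma (γ + k + 1 + j) / Gamma (γ + 1 + j))) := by
    intro j hj
    rw [laguerreCoeff_eq_choose γ (mem_range_succ_iff.mp hj)]
    push_cast
    rw [show γ + (k + j) + 1 = γ + k + 1 + j by ring,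
      show (j : ℝ) + γ + 1 = γ + 1 + j by ring]
    ring
  rw [sum_congr rfl hterm, ← mul_sum,
    sum_neg_one_pow_mul_choose_mul_Gamma_div_Gamma (by linarith [k.cast_nonneg (α := ℝ)])
      (by linarith),
    show γ + 1 - (γ + k + 1) = -k by ring, ascPochhammer_eval_neg_eq_descPochhammer,
    descPochhammer_eval_eq_descFactorial]
  have := (Gamma_pos_of_pos (show 0 < n + γ + 1 by linarith [n.cast_nonneg (α := ℝ)])).ne'
  rw [show γ + 1 + (n : ℝ) = n + γ + 1 by ring]
  field_simp

theorem sum_laguerreCoeff_mul_descFactorial_mul_Gamma {α β : ℝ} (hα : -1 < α) (hβ : -1 < β)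
    {m n : ℕ} (hnm : n ≤ m) :
    ∑ k ∈ range (m + 1), laguerreCoeff α m k * (k.descFactorial n * Gamma (β + k + 1)) =
      (-1) ^ n * (ascPochhammer ℝ (m - n)).eval (α - β) * Gamma (n + β + 1) /
        (m - n).factorial := by
  obtain ⟨M, rfl⟩ := Nat.exists_eq_add_of_le hnm
  have hterm : ∀ s ∈ range (M + 1),
      laguerreCoeff α (n + M) (n + s) *
          ((n + s).descFactorial n * Gamma (β + (n + s : ℕ) + 1)) =
        (-1) ^ n * Gamma (n + M + α + 1) / M.factorial *
          ((-1) ^ s * M.choose s * (Gamma (β + n + 1 + s) / Gamma (α + n + 1 + s))) := by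
    intro s hs
    have hsM := mem_range_succ_iff.mp hs
    have hdesc : ((n + s).descFactorial n : ℝ) * s.factorial = (n + s).factorial := by
      have := Nat.factorial_mul_descFactorial (n.le_add_right s)
      rw [Nat.add_sub_cancel_left, mul_comm] at this
      exact_mod_cast this
    have hchoose : (M.choose s : ℝ) * s.factorial * (M - s).factorial = M.factorial := by
      exact_mod_cast Nat.choose_mul_factorial_mul_factorial hsM
    have hM : n + M - (n + s) = M - s := by omega
    have : (M.choose s : ℝ) ≠ 0 := by exact_mod_cast (Nat.choose_pos hsM).ne'
    rw [laguerreCoeff, hM, ← hdesc, ← hchoose, pow_add]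
    push_cast
    rw [show (n : ℝ) + s + α + 1 = α + n + 1 + s by ring,
      show β + (n + s) + 1 = β + n + 1 + s by ring]
    field_simp
  rw [add_assoc, sum_range_add, sum_eq_zero fun k hk => by
      rw [Nat.descFactorial_eq_zero_iff_lt.mpr (mem_range.mp hk), Nat.cast_zero, zero_mul,
        mul_zero],
    zero_add, sum_congr rfl hterm, ← mul_sum,
    sum_neg_one_pow_mul_choose_mul_Gamma_div_Gamma (by linarith [n.cast_nonneg (α := ℝ)])
      (by linarith [n.cast_nonneg (α := ℝ)]), Nat.add_sub_cancel_left]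
  have := (Gamma_pos_of_pos
    (show 0 < n + M + α + 1 by linarith [(n + M : ℕ).cast_nonneg (α := ℝ)])).ne'
  rw [show α + n + 1 - (β + n + 1) = α - β by ring,
    show α + n + 1 + (M : ℝ) = n + M + α + 1 by ring,
    show β + n + 1 = (n : ℝ) + β + 1 by ring]
  field_simp

theorem integral_laguerreL_mul_laguerreL {α β : ℝ} (hα : -1 < α) (hβ : -1 < β) {m n : ℕ}
    (hnm : n ≤ m) :
    ∫ x in Set.Ioi 0, laguerreL α m x * laguerreL β n x * x ^ β * exp (-x) =
      (ascPochhammer ℝ (m - n)).eval (α - β) * Gamma (n + β + 1) /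
        (n.factorial * (m - n).factorial) := by
  have hprod : ∀ x, laguerreL α m x * laguerreL β n x =
      ∑ p ∈ range (m + 1) ×ˢ range (n + 1),
        laguerreCoeff α m p.1 * laguerreCoeff β n p.2 * x ^ (p.1 + p.2) := by
    intro x
    rw [laguerreL_eq_sum, laguerreL_eq_sum, sum_mul_sum, sum_product]
    exact sum_congr rfl fun k _ => sum_congr rfl fun j _ => by ring
  simp_rw [hprod]
  rw [integral_sum_mul_pow_mul_rpow_mul_exp_neg _ _ _ hβ, sum_product]
  simp_rw [mul_assoc, ← mul_sum, sum_laguerreCoeff_mul_Gamma hβ]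
  have hterm : ∀ k : ℕ, laguerreCoeff α m k *
      ((-1) ^ n * k.descFactorial n * Gamma (β + k + 1) / n.factorial) =
        (-1) ^ n / n.factorial *
          (laguerreCoeff α m k * (k.descFactorial n * Gamma (β + k + 1))) :=
    fun k => by ring
  simp_rw [hterm]
  rw [← mul_sum, sum_laguerreCoeff_mul_descFactorial_mul_Gamma hα hβ hnm]
  field_simp
  rw [← pow_mul, Even.neg_one_pow ⟨n, by ring⟩, one_mul]

theorem sqrt_div_mul_sqrt_div_mul_div (a b : ℝ) {c d : ℝ} (hc : 0 < c) (hd : 0 < d) :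
    √(a / b) * √(c / d) * (d / c) = √(a * d / (c * b)) := by
  have hdc : √(c / d) * (d / c) = √(d / c) := by
    have ht : √(d / c) ≠ 0 := (sqrt_pos.mpr (div_pos hd hc)).ne'
    rw [← inv_div d c, sqrt_inv]
    conv_lhs => arg 2; rw [← mul_self_sqrt (div_pos hd hc).le]
    field_simp
  rw [mul_assoc, hdc, ← sqrt_mul' _ (div_pos hd hc).le]
  ring_nf

/-- For `α, β > 0` and `0 ≤ n ≤ m`:
`𝒟_{m,n} = (−1)^{m−n} ((α−β)_{m−n}/(m−n)!) √(m! Γ(n+1+β)/(n! Γ(m+1+α)))`,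
where `(z)_k` is the Pochhammer symbol. -/
theorem laguerre_laguerre_connection_coefficients
    (α β : ℝ) (hα : 0 < α) (hβ : 0 < β) (m n : ℕ) (hnm : n ≤ m) :
    DLag α β m n
      = (-1 : ℝ) ^ (m - n) * ((ascPochhammer ℝ (m - n)).eval (α - β) / Nat.factorial (m - n))
          * Real.sqrt ((Nat.factorial m : ℝ) * Real.Gamma ((n : ℝ) + 1 + β) /
              ((Nat.factorial n : ℝ) * Real.Gamma ((m : ℝ) + 1 + α))) := by
  have hDLag : DLag α β m n =
      (-1) ^ m * √(m.factorial / Gamma (m + α + 1)) *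
        ((-1) ^ n * √(n.factorial / Gamma (n + β + 1))) *
        ∫ x in Set.Ioi 0, laguerreL α m x * laguerreL β n x * x ^ β * exp (-x) := by
    rw [DLag, ← integral_const_mul]
    congr 1 with x
    rw [laguerreTilde, laguerreTilde]
    ring
  have hsign : (-1 : ℝ) ^ m * (-1) ^ n = (-1) ^ (m - n) := by
    rw [← Nat.sub_add_cancel hnm, pow_add, mul_assoc, ← mul_pow, neg_one_mul, neg_neg, one_pow,
      mul_one, Nat.add_sub_cancel]
  rw [hDLag, integral_laguerreL_mul_laguerreL (by linarith) (by linarith) hnm, ← hsign,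
    add_right_comm (n : ℝ) 1 β, add_right_comm (m : ℝ) 1 α,
    ← sqrt_div_mul_sqrt_div_mul_div _ _ (Nat.cast_pos.mpr n.factorial_pos)
      (Gamma_pos_of_pos (by positivity))]
  field_simp
end

section
/- Define G_n^m = ∫_{−1}^{1} (1 − x²)^{(m−1)/2} P_n^m(x) dx and H_n^m = ∫_{−1}^{1} x (1 − x²)^{(m−1)/2} P_n^m(x) dx for integers 0 ≤ m ≤ n. Then for all integers 0 ≤ m ≤ n − 1: H_n^m = ((m+n)/(m+n+1)) · G_{n−1}^m. -/
open MeasureTheory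

/-- The associated Legendre function on `(−1,1)`:
`P_n^m(x) = (−1)^m (1 − x²)^{m/2} dᵐ/dxᵐ P_n(x)`. -/
noncomputable def assocLegendreP (n m : ℕ) (x : ℝ) : ℝ :=
  (-1 : ℝ) ^ m * (1 - x ^ 2) ^ ((m : ℝ) / 2) * iteratedDeriv m (legendreP n) x

/-- `G_n^m = ∫_{−1}^{1} (1 − x²)^{(m−1)/2} P_n^m(x) dx`. -/
noncomputable def Gint (n m : ℕ) : ℝ :=
  ∫ x in (-1 : ℝ)..1, (1 - x ^ 2) ^ (((m : ℝ) - 1) / 2) * assocLegendreP n m x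

/-- `H_n^m = ∫_{−1}^{1} x (1 − x²)^{(m−1)/2} P_n^m(x) dx`. -/
noncomputable def Hint (n m : ℕ) : ℝ :=
  ∫ x in (-1 : ℝ)..1, x * (1 - x ^ 2) ^ (((m : ℝ) - 1) / 2) * assocLegendreP n m x

/-! Write `p = D^m P_{k+1}`, `q = D^m P_k` and `w = (1 - x²)^(m - 1/2)`; then `H_{k+1}^m` and
`G_k^m` are `(-1)^m ∫ w x p` and `(-1)^m ∫ w q`. The Rodrigues formula gives the polynomial
identity `(1 - x²) p' = (k+1+m) q - (k+1-m) x p`, and integrating the derivative of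
`(1 - x²)^(m + 1/2) p`, which vanishes at `±1`, gives `∫ w (1 - x²) p' = (2m+1) ∫ w x p`.
Together, `(k+m+2) ∫ w x p = (k+m+1) ∫ w q`. -/
open Polynomial

theorem iteratedDeriv_eval_polynomial (p : ℝ[X]) (k : ℕ) :
    iteratedDeriv k (fun x => p.eval x) = fun x => (derivative^[k] p).eval x := by
  induction k with
  | zero => rfl
  | succ k ih =>
    rw [iteratedDeriv_succ, ih, Function.iterate_succ_apply']
    exact funext fun x => Polynomial.deriv _

noncomputable def legendrePoly (n : ℕ) : ℝ[X] :=
  C (1 / (2 ^ n * n.factorial : ℝ)) * derivative^[n] ((X ^ 2 - 1 : ℝ[X]) ^ n)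

theorem legendreP_eq_eval (n : ℕ) : legendreP n = fun x => (legendrePoly n).eval x := by
  have h : (fun y : ℝ => (y ^ 2 - 1) ^ n) = fun y => ((X ^ 2 - 1) ^ n : ℝ[X]).eval y := by
    simp
  ext x
  simp [legendreP, legendrePoly, h, iteratedDeriv_eval_polynomial]

theorem iterate_derivative_legendrePoly (n m : ℕ) :
    derivative^[m] (legendrePoly n)
      = C (1 / (2 ^ n * n.factorial : ℝ)) * derivative^[m + n] ((X ^ 2 - 1 : ℝ[X]) ^ n) := by
  rw [legendrePoly, iterate_derivative_C_mul, Function.iterate_add_apply]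

theorem derivative_sq_sub_one_pow (k : ℕ) :
    derivative ((X ^ 2 - 1 : ℝ[X]) ^ k) = C (2 * k : ℝ) * ((X ^ 2 - 1) ^ (k - 1) * X) := by
  rw [derivative_pow]
  simp only [derivative_sub, derivative_X_pow, derivative_one, map_mul, map_natCast,
    Nat.cast_ofNat, map_ofNat]
  ring

theorem iterate_derivative_legendrePoly_succ (k m : ℕ) :
    derivative^[m] (legendrePoly (k + 1)) = C (1 / (2 ^ k * k.factorial : ℝ)) *
      (derivative^[m + k] ((X ^ 2 - 1 : ℝ[X]) ^ k) * X
        + ((m + k : ℕ) : ℝ[X]) * derivative^[m + k - 1] ((X ^ 2 - 1 : ℝ[X]) ^ k)) := by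
  have hc : (1 / (2 ^ k * k.factorial) : ℝ)
      = 1 / (2 ^ (k + 1) * (k + 1).factorial) * (2 * (k + 1 : ℕ)) := by
    rw [Nat.factorial_succ, pow_succ]; push_cast; field_simp
  rw [iterate_derivative_legendrePoly, ← add_assoc, Function.iterate_succ_apply,
    derivative_sq_sub_one_pow, Nat.add_sub_cancel, iterate_derivative_C_mul,
    iterate_derivative_mul_X, nsmul_eq_mul, ← mul_assoc, ← C_mul, ← hc]

/-- Differentiate `(X² - 1) U' = 2k X U`, `U = (X² - 1)^k`, `j` times. The truncated index
`j - 1` is harmless: its coefficient vanishes at `j = 0`. -/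
theorem sq_sub_one_mul_iterate_derivative_sq_sub_one_pow (k : ℕ) : ∀ j : ℕ,
    (X ^ 2 - 1 : ℝ[X]) * derivative^[j + 1] ((X ^ 2 - 1 : ℝ[X]) ^ k)
      = 2 * ((k : ℝ[X]) - (j : ℝ[X])) * (X * derivative^[j] ((X ^ 2 - 1 : ℝ[X]) ^ k))
        + (j : ℝ[X]) * (2 * (k : ℝ[X]) - (j : ℝ[X]) + 1)
          * derivative^[j - 1] ((X ^ 2 - 1 : ℝ[X]) ^ k)
  | 0 => by
    rcases k with _ | k
    · simp
    · rw [zero_add, Function.iterate_one, derivative_sq_sub_one_pow, Nat.add_sub_cancel]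
      simp only [Function.iterate_zero, id_eq, Nat.cast_zero, map_mul, map_natCast, map_ofNat]
      ring
  | j + 1 => by
    have ih := congrArg derivative (sq_sub_one_mul_iterate_derivative_sq_sub_one_pow k j)
    have hj : (j : ℝ[X]) * (2 * k - j + 1)
          * derivative (derivative^[j - 1] ((X ^ 2 - 1 : ℝ[X]) ^ k))
        = (j : ℝ[X]) * (2 * k - j + 1) * derivative^[j] ((X ^ 2 - 1 : ℝ[X]) ^ k) := by
      rcases j with _ | j
      · simp
      · rw [Nat.add_sub_cancel, ← Function.iterate_succ_apply' derivative]
    simp only [derivative_add, derivative_mul, derivative_sub, derivative_X_pow, derivative_one,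
      derivative_X, derivative_natCast, derivative_ofNat, Nat.cast_ofNat, map_ofNat,
      Function.iterate_succ_apply'] at ih
    simp only [Nat.add_sub_cancel, Function.iterate_succ_apply']
    push_cast
    linear_combination ih + hj

theorem one_sub_X_sq_mul_iterate_derivative_legendrePoly_succ (k m : ℕ) :
    (1 - X ^ 2) * derivative^[m + 1] (legendrePoly (k + 1))
      = C ((k : ℝ) + 1 + m) * derivative^[m] (legendrePoly k)
        - C ((k : ℝ) + 1 - m) * (X * derivative^[m] (legendrePoly (k + 1))) := by
  have ode := sq_sub_one_mul_iterate_derivative_sq_sub_one_pow k (m + k)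
  rw [iterate_derivative_legendrePoly_succ, iterate_derivative_legendrePoly_succ,
    iterate_derivative_legendrePoly, show m + 1 + k = m + k + 1 by ring, Nat.add_sub_cancel]
  simp only [map_add, map_sub, map_natCast, map_one, Nat.cast_add, Nat.cast_one] at ode ⊢
  linear_combination (-C (1 / (2 ^ k * k.factorial : ℝ)) * X) * ode

theorem intervalIntegrable_one_sub_sq_rpow {μ : ℝ} (hμ : -1 < μ) :
    IntervalIntegrable (fun x : ℝ => (1 - x ^ 2) ^ μ) volume (-1) 1 := by
  have right : IntervalIntegrable (fun x : ℝ => (1 - x ^ 2) ^ μ) volume 0 1 := by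
    have h := ((intervalIntegral.intervalIntegrable_rpow' hμ (a := 1) (b := 0)).comp_sub_left 1)
      |>.mul_continuousOn (g := fun x : ℝ => (1 + x) ^ μ) ?_
    · rw [sub_self, sub_zero] at h
      refine h.congr_uIoo fun x hx => ?_
      rw [Set.uIoo_of_le zero_le_one] at hx
      dsimp only
      rw [← Real.mul_rpow (by linarith [hx.2]) (by linarith [hx.1])]
      ring_nf
    · refine ContinuousOn.rpow_const (by fun_prop) fun x hx => Or.inl ?_
      rw [sub_self, sub_zero, Set.uIcc_of_le zero_le_one] at hx
      linarith [hx.1]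
  have left : IntervalIntegrable (fun x : ℝ => (1 - x ^ 2) ^ μ) volume (-1) 0 := by
    simpa using ((IntervalIntegrable.iff_comp_neg).mp right).symm
  exact left.trans right

noncomputable def weightedIntegral (μ : ℝ) (p : ℝ[X]) : ℝ :=
  ∫ x in (-1 : ℝ)..1, (1 - x ^ 2) ^ μ * p.eval x

theorem intervalIntegrable_one_sub_sq_rpow_mul_eval {μ : ℝ} (hμ : -1 < μ) (p : ℝ[X]) :
    IntervalIntegrable (fun x : ℝ => (1 - x ^ 2) ^ μ * p.eval x) volume (-1) 1 :=
  (intervalIntegrable_one_sub_sq_rpow hμ).mul_continuousOn p.continuous.continuousOn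

theorem weightedIntegral_sub {μ : ℝ} (hμ : -1 < μ) (p q : ℝ[X]) :
    weightedIntegral μ (p - q) = weightedIntegral μ p - weightedIntegral μ q := by
  simp only [weightedIntegral, eval_sub, mul_sub]
  exact intervalIntegral.integral_sub (intervalIntegrable_one_sub_sq_rpow_mul_eval hμ p)
    (intervalIntegrable_one_sub_sq_rpow_mul_eval hμ q)

theorem weightedIntegral_C_mul (μ a : ℝ) (p : ℝ[X]) :
    weightedIntegral μ (C a * p) = a * weightedIntegral μ p := by
  simp only [weightedIntegral, eval_mul, eval_C, mul_left_comm _ a]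
  exact intervalIntegral.integral_const_mul _ _

theorem weightedIntegral_one_sub_X_sq_mul_derivative {μ : ℝ} (hμ : -1 < μ) (p : ℝ[X]) :
    weightedIntegral μ ((1 - X ^ 2) * derivative p)
      = 2 * (μ + 1) * weightedIntegral μ (X * p) := by
  set F : ℝ → ℝ := fun x => (1 - x ^ 2) ^ (μ + 1) * p.eval x
  have hF : Continuous F :=
    ((continuous_const.sub (continuous_pow 2)).rpow_const fun _ => Or.inr (by linarith)).mul
      p.continuous
  have hF' : ∀ x ∈ Set.Ioo (-1 : ℝ) 1, HasDerivAt F ((1 - x ^ 2) ^ μ *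
      ((1 - X ^ 2) * derivative p - C (2 * (μ + 1)) * (X * p)).eval x) x := by
    intro x ⟨hx₁, hx₂⟩
    have hpos : 0 < 1 - x ^ 2 := by nlinarith
    have hw : HasDerivAt (fun y : ℝ => 1 - y ^ 2) (-(2 * x)) x := by
      simpa using (hasDerivAt_pow 2 x).const_sub 1
    refine ((hw.rpow_const (p := μ + 1) (Or.inl hpos.ne')).mul (p.hasDerivAt x)).congr_deriv ?_
    rw [add_sub_cancel_right, Real.rpow_add hpos, Real.rpow_one]
    simp only [eval_mul, eval_sub, eval_one, eval_pow, eval_X, eval_C]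
    ring
  have hFTC := intervalIntegral.integral_eq_sub_of_hasDerivAt_of_le (by norm_num) hF.continuousOn
    hF' (intervalIntegrable_one_sub_sq_rpow_mul_eval hμ _)
  have hF₁ : F 1 = 0 := by simp [F, Real.zero_rpow (by linarith : μ + 1 ≠ 0)]
  have hF_neg : F (-1) = 0 := by simp [F, Real.zero_rpow (by linarith : μ + 1 ≠ 0)]
  rw [hF₁, hF_neg, sub_zero, ← weightedIntegral, weightedIntegral_sub hμ,
    weightedIntegral_C_mul] at hFTC
  linarith

theorem weightedIntegral_X_mul_iterate_derivative_legendrePoly_succ (k m : ℕ) :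
    (k + m + 2) * weightedIntegral (m - 1 / 2) (X * derivative^[m] (legendrePoly (k + 1)))
      = (k + 1 + m) * weightedIntegral (m - 1 / 2) (derivative^[m] (legendrePoly k)) := by
  have hμ : (-1 : ℝ) < m - 1 / 2 := by linarith [m.cast_nonneg (α := ℝ)]
  have key := weightedIntegral_one_sub_X_sq_mul_derivative hμ
    (derivative^[m] (legendrePoly (k + 1)))
  rw [← Function.iterate_succ_apply' derivative,
    one_sub_X_sq_mul_iterate_derivative_legendrePoly_succ, weightedIntegral_sub hμ,
    weightedIntegral_C_mul, weightedIntegral_C_mul] at key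
  linear_combination -key

theorem one_sub_sq_rpow_mul_assocLegendreP (n m : ℕ) {x : ℝ} (hx : 0 ≤ 1 - x ^ 2) :
    (1 - x ^ 2) ^ (((m : ℝ) - 1) / 2) * assocLegendreP n m x
      = (-1) ^ m *
        ((1 - x ^ 2) ^ ((m : ℝ) - 1 / 2) * (derivative^[m] (legendrePoly n)).eval x) := by
  have hm : ((m : ℝ) - 1) / 2 + m / 2 ≠ 0 := by
    intro h
    have : (2 * m : ℝ) = 1 := by linarith
    norm_cast at this
    omega
  rw [assocLegendreP, legendreP_eq_eval, iteratedDeriv_eval_polynomial,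
    show (m : ℝ) - 1 / 2 = ((m : ℝ) - 1) / 2 + m / 2 by ring, Real.rpow_add' hx hm]
  ring

theorem one_sub_sq_nonneg_of_mem_uIcc {x : ℝ} (hx : x ∈ Set.uIcc (-1 : ℝ) 1) :
    0 ≤ 1 - x ^ 2 := by
  rw [Set.uIcc_of_le (by norm_num)] at hx
  nlinarith [hx.1, hx.2]

theorem Gint_eq_weightedIntegral (n m : ℕ) :
    Gint n m = (-1) ^ m * weightedIntegral (m - 1 / 2) (derivative^[m] (legendrePoly n)) := by
  rw [Gint, weightedIntegral, ← intervalIntegral.integral_const_mul]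
  exact intervalIntegral.integral_congr fun x hx =>
    one_sub_sq_rpow_mul_assocLegendreP n m (one_sub_sq_nonneg_of_mem_uIcc hx)

theorem Hint_eq_weightedIntegral (n m : ℕ) :
    Hint n m = (-1) ^ m * weightedIntegral (m - 1 / 2) (X * derivative^[m] (legendrePoly n)) := by
  rw [Hint, weightedIntegral, ← intervalIntegral.integral_const_mul]
  refine intervalIntegral.integral_congr fun x hx => ?_
  simp only [mul_assoc, one_sub_sq_rpow_mul_assocLegendreP n m (one_sub_sq_nonneg_of_mem_uIcc hx),
    eval_mul, eval_X]
  ring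

/-- For `0 ≤ m ≤ n − 1`: `H_n^m = ((m+n)/(m+n+1))·G_{n−1}^m`. -/
theorem Hint_eq (m n : ℕ) (hmn : m + 1 ≤ n) :
    Hint n m = ((m : ℝ) + n) / ((m : ℝ) + n + 1) * Gint (n - 1) m := by
  obtain ⟨k, rfl⟩ : ∃ k, n = k + 1 := ⟨n - 1, by omega⟩
  have hrec := weightedIntegral_X_mul_iterate_derivative_legendrePoly_succ k m
  rw [Hint_eq_weightedIntegral, Nat.add_sub_cancel, Gint_eq_weightedIntegral]
  push_cast
  rw [div_mul_eq_mul_div, eq_div_iff (by positivity)]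
  linear_combination (-1) ^ m * hrec
end

section
/- Define g^m_{ℓ,n} = ∫_{−1}^{1} P_ℓ^m(x) P_n^m(x) / √(1 − x²) dx for integers m ≤ min{ℓ, n}. Then for every m ∈ ℕ: g^m_{m,m} = π (2m)! · (4^{−m} C(2m, m))², where C(a, b) denotes the binomial coefficient. -/
open MeasureTheory

/-- `g^m_{ℓ,n} = ∫_{−1}^{1} P_ℓ^m(x) P_n^m(x)/√(1 − x²) dx`. -/
noncomputable def gInt (m l n : ℕ) : ℝ :=
  ∫ x in (-1 : ℝ)..1, assocLegendreP l m x * assocLegendreP n m x / Real.sqrt (1 - x ^ 2)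

/-! The `m`-th derivative of `P_m` is the constant `(2m)!/(2^m m!)` (its leading coefficient
times `m!`), so `P_m^m(x)² = ((2m)!/(2^m m!))² (1 - x²)^m` on `[-1, 1]`. The substitution
`x = cos θ` turns `∫ (1 - x²)^m / √(1 - x²)` into Wallis' integral `∫₀^π sin^{2m} θ`,
which is `π (2m choose m) / 4^m`. -/

open scoped Nat
open Polynomial Real Set intervalIntegral

theorem iteratedDeriv_polynomial_eval (p : ℝ[X]) (n : ℕ) :
    iteratedDeriv n (fun x => p.eval x) = fun x => (derivative^[n] p).eval x := by
  induction n generalizing p with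
  | zero => rfl
  | succ n ih =>
    rw [iteratedDeriv_succ', show (deriv fun x => p.eval x) = fun x => (derivative p).eval x
      from funext fun x => p.deriv, ih, Function.iterate_succ_apply]

theorem Polynomial.Monic.iterate_derivative_natDegree {R : Type*} [CommSemiring R] {p : R[X]}
    (hp : p.Monic) : derivative^[p.natDegree] p = C (p.natDegree ! : R) := by
  have hdeg : (derivative^[p.natDegree] p).natDegree = 0 := by
    have := natDegree_iterate_derivative p p.natDegree
    omega
  rw [eq_C_of_natDegree_eq_zero hdeg, coeff_iterate_derivative, zero_add, hp.coeff_natDegree,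
    Nat.descFactorial_self, nsmul_one]

theorem legendreP_eq_eval_s16 (n : ℕ) :
    legendreP n = fun x =>
      (C (1 / ((2 : ℝ) ^ n * n !)) * derivative^[n] ((X ^ 2 - 1) ^ n)).eval x := by
  have hrod : (fun y : ℝ => (y ^ 2 - 1) ^ n) = fun y => ((X ^ 2 - 1 : ℝ[X]) ^ n).eval y := by
    simp
  funext x
  simp [legendreP, hrod, iteratedDeriv_polynomial_eval]

theorem iteratedDeriv_legendreP_self (m : ℕ) (x : ℝ) :
    iteratedDeriv m (legendreP m) x = (2 * m)! / (2 ^ m * m !) := by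
  have hmonic : (X ^ 2 - C 1 : ℝ[X]).Monic := monic_X_pow_sub_C 1 two_ne_zero
  have hdeg : ((X ^ 2 - C 1 : ℝ[X]) ^ m).natDegree = 2 * m := by
    rw [natDegree_pow, natDegree_X_pow_sub_C, mul_comm]
  have htop := (hmonic.pow m).iterate_derivative_natDegree
  rw [hdeg, C_1] at htop
  rw [legendreP_eq_eval_s16, iteratedDeriv_polynomial_eval, iterate_derivative_C_mul,
    ← Function.iterate_add_apply, ← two_mul, htop]
  simp [div_eq_inv_mul]

theorem assocLegendreP_mul_self {x : ℝ} (hx : x ^ 2 ≤ 1) (n m : ℕ) :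
    assocLegendreP n m x * assocLegendreP n m x
      = (1 - x ^ 2) ^ m * iteratedDeriv m (legendreP n) x ^ 2 := by
  have h0 : 0 ≤ 1 - x ^ 2 := sub_nonneg.2 hx
  rw [assocLegendreP, rpow_div_two_eq_sqrt _ h0, rpow_natCast]
  calc _ = ((-1) ^ m * (-1) ^ m) * (√(1 - x ^ 2) * √(1 - x ^ 2)) ^ m
        * iteratedDeriv m (legendreP n) x ^ 2 := by ring
    _ = _ := by rw [← pow_add, Even.neg_one_pow ⟨m, rfl⟩, mul_self_sqrt h0, one_mul]

/-- No integrability is assumed: this is the change of variables for the injective map `cos` on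
`[0, π]`, valid for Bochner integrals of arbitrary functions. -/
theorem integral_neg_one_one_eq_integral_sin_smul_cos {E : Type*} [NormedAddCommGroup E]
    [NormedSpace ℝ E] (g : ℝ → E) :
    ∫ x in (-1 : ℝ)..1, g x = ∫ θ in 0..π, sin θ • g (cos θ) := by
  rw [integral_of_le (by norm_num), integral_of_le pi_pos.le, ← integral_Icc_eq_integral_Ioc,
    ← integral_Icc_eq_integral_Ioc, ← bijOn_cos.image_eq,
    integral_image_eq_integral_abs_deriv_smul measurableSet_Icc
      (fun θ _ => (hasDerivAt_cos θ).hasDerivWithinAt) injOn_cos]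
  refine setIntegral_congr_fun measurableSet_Icc fun θ hθ => ?_
  rw [abs_neg, abs_of_nonneg (sin_nonneg_of_nonneg_of_le_pi hθ.1 hθ.2)]

theorem prod_range_odd_div_even_eq_choose_div_four_pow (n : ℕ) :
    ∏ i ∈ Finset.range n, (2 * (i : ℝ) + 1) / (2 * i + 2) = (2 * n).choose n / 4 ^ n := by
  induction n with
  | zero => simp
  | succ n ih =>
    have hrec := Nat.succ_mul_centralBinom_succ n
    simp only [Nat.centralBinom_eq_two_mul_choose] at hrec
    have hrec' : ((n : ℝ) + 1) * (2 * (n + 1)).choose (n + 1)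
        = 2 * (2 * n + 1) * (2 * n).choose n := by exact_mod_cast hrec
    rw [Finset.prod_range_succ, ih, pow_succ]
    field_simp
    linear_combination (-2 : ℝ) * hrec'

theorem integral_one_sub_sq_pow_div_sqrt (m : ℕ) :
    ∫ x in (-1 : ℝ)..1, (1 - x ^ 2) ^ m / √(1 - x ^ 2) = π * (2 * m).choose m / 4 ^ m := by
  rw [integral_neg_one_one_eq_integral_sin_smul_cos]
  calc _ = ∫ θ in 0..π, sin θ ^ (2 * m) := by
        -- at `θ = π` the two sides differ when `m = 0`
        refine integral_congr_ae ((Measure.ae_ne volume π).mono fun θ hπ hθ => ?_)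
        rw [uIoc_of_le pi_pos.le] at hθ
        have hsin : 0 < sin θ := sin_pos_of_pos_of_lt_pi hθ.1 (lt_of_le_of_ne hθ.2 hπ)
        rw [← sin_sq, sqrt_sq hsin.le, smul_eq_mul, pow_mul]
        field_simp
    _ = _ := by
        rw [integral_sin_pow_even, prod_range_odd_div_even_eq_choose_div_four_pow, mul_div_assoc]

/-- For every `m ∈ ℕ`: `g^m_{m,m} = π (2m)!·(4^{−m} C(2m,m))²`. -/
theorem gInt_diag_start (m : ℕ) :
    gInt m m m
      = Real.pi * Nat.factorial (2 * m) *
          ((Nat.choose (2 * m) m : ℝ) / 4 ^ m) ^ 2 := by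
  set c : ℝ := (2 * m)! / (2 ^ m * m !) with hc_def
  have hintegrand : ∀ x ∈ uIcc (-1 : ℝ) 1, assocLegendreP m m x * assocLegendreP m m x
      / √(1 - x ^ 2) = c ^ 2 * ((1 - x ^ 2) ^ m / √(1 - x ^ 2)) := by
    intro x hx
    rw [uIcc_of_le (by norm_num)] at hx
    rw [assocLegendreP_mul_self (by nlinarith [hx.1, hx.2]), iteratedDeriv_legendreP_self]
    ring
  have hc_sq : c ^ 2 = (2 * m)! * ((2 * m).choose m / 4 ^ m) := by
    have hfac := Nat.choose_mul_factorial_mul_factorial (show m ≤ 2 * m by omega)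
    rw [show 2 * m - m = m by omega] at hfac
    rw [hc_def, ← hfac, show (4 : ℝ) ^ m = 2 ^ m * 2 ^ m by rw [← mul_pow]; norm_num]
    push_cast
    field_simp
  rw [gInt, integral_congr hintegrand, intervalIntegral.integral_const_mul,
    integral_one_sub_sq_pow_div_sqrt, hc_sq]
  ring
end

section
/- Define g^m_{ℓ,n} = ∫_{−1}^{1} P_ℓ^m(x) P_n^m(x) / √(1 − x²) dx for integers m ≤ min{ℓ, n}. Then for every m ∈ ℕ: g^m_{m+2,m+2} = (π (2m+1)! / (2 · 4^{2m+2})) · ((8m² + 20m + 11)/(2m+3)) · C(2m, m) · C(2m+3, m+1), where C(a, b) denotes the binomial coefficient. -/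
open MeasureTheory

namespace GIntAux

open Polynomial Real


lemma iteratedDeriv_polynomial (p : ℝ[X]) (k : ℕ) :
    iteratedDeriv k (fun x => p.eval x) = fun x => (derivative^[k] p).eval x := by
  induction k with
  | zero => simp
  | succ k ih =>
    rw [iteratedDeriv_succ, ih, Function.iterate_succ_apply']
    funext x
    exact Polynomial.deriv (p := derivative^[k] p)

lemma key_poly (m : ℕ) :
    derivative^[2*m+2] (((X:ℝ[X])^2 - 1)^(m+2))
      = C (((2*m+4).descFactorial (2*m+2) : ℝ)) * X^2
        - C (((m+2) * (2*m+2).factorial : ℝ)) := by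
  have h : ((X:ℝ[X])^2 - 1)^(m+2)
      = ∑ k ∈ Finset.range (m+3), C (((-1:ℝ))^(k+(m+2)) * ((m+2).choose k : ℝ)) * X^(2*k) := by
    rw [sub_pow]
    apply Finset.sum_congr rfl
    intro k hk
    simp only [map_mul, map_pow, map_neg, map_one, map_natCast, ← pow_mul]
    ring
  rw [h, iterate_derivative_sum, Finset.sum_range_succ, Finset.sum_range_succ]
  have hzero : ∀ k ∈ Finset.range (m+1),
      derivative^[2*m+2] (C (((-1:ℝ))^(k+(m+2)) * ((m+2).choose k : ℝ)) * X^(2*k)) = 0 := by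
    intro k hk
    rw [iterate_derivative_C_mul, iterate_derivative_X_pow_eq_natCast_mul]
    rw [Finset.mem_range] at hk
    rw [Nat.descFactorial_eq_zero_iff_lt.mpr (by omega)]
    simp
  rw [Finset.sum_eq_zero hzero]
  rw [iterate_derivative_C_mul, iterate_derivative_C_mul,
    iterate_derivative_X_pow_eq_natCast_mul, iterate_derivative_X_pow_eq_natCast_mul]
  have e1 : 2*(m+1) - (2*m+2) = 0 := by omega
  have e2 : 2*(m+2) - (2*m+2) = 2 := by omega
  have e3 : 2*(m+1) = 2*m+2 := by omega
  rw [e1, e2, e3, Nat.descFactorial_self]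
  have e4 : ((-1:ℝ))^(m+1+(m+2)) = -1 := by
    have : m+1+(m+2) = 2*(m+1)+1 := by omega
    rw [this, pow_succ, pow_mul]; norm_num
  have e5 : ((-1:ℝ))^(m+2+(m+2)) = 1 := by
    have : m+2+(m+2) = 2*(m+2) := by omega
    rw [this, pow_mul]; norm_num
  rw [e4, e5, Nat.choose_succ_self_right, Nat.choose_self]
  have e6 : 2*(m+2) = 2*m+4 := by omega
  rw [e6]
  apply Polynomial.funext; intro x
  simp only [eval_add, eval_mul, eval_pow, eval_C, eval_X, eval_sub, eval_natCast,
    eval_zero, pow_zero, mul_one]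
  push_cast
  ring

noncomputable def cA (m : ℕ) : ℝ :=
  ((2*m+4).descFactorial (2*m+2) : ℝ) / (2^(m+2) * (m+2).factorial)

noncomputable def cB (m : ℕ) : ℝ :=
  ((m+2) * (2*m+2).factorial : ℝ) / (2^(m+2) * (m+2).factorial)

lemma iterD (m : ℕ) :
    iteratedDeriv m (legendreP (m+2)) = fun x => cA m * x^2 - cB m := by
  have hp : (fun y : ℝ => (y ^ 2 - 1) ^ (m+2))
      = fun y : ℝ => (((X:ℝ[X])^2 - 1)^(m+2)).eval y := by
    funext y; simp
  have hL : legendreP (m+2)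
      = fun x => (C (1 / ((2:ℝ)^(m+2) * (m+2).factorial)) *
          derivative^[m+2] (((X:ℝ[X])^2 - 1)^(m+2))).eval x := by
    funext x
    rw [legendreP, hp, iteratedDeriv_polynomial]
    simp [mul_comm]
  rw [hL, iteratedDeriv_polynomial]
  funext x
  rw [iterate_derivative_C_mul]
  have : derivative^[m] (derivative^[m+2] (((X:ℝ[X])^2 - 1)^(m+2)))
      = derivative^[2*m+2] (((X:ℝ[X])^2 - 1)^(m+2)) := by
    rw [← Function.iterate_add_apply]
    congr 1
    omega
  rw [this, key_poly]
  simp [cA, cB]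
  ring

lemma prod_eq (k : ℕ) :
    (∏ i ∈ Finset.range k, (2*(i:ℝ)+1)/(2*i+2)) = ((2*k).choose k : ℝ) / 4^k := by
  induction k with
  | zero => simp
  | succ k ih =>
    rw [Finset.prod_range_succ, ih]
    have hnat : (k+1) * Nat.centralBinom (k+1) = 2 * (2*k+1) * Nat.centralBinom k :=
      Nat.succ_mul_centralBinom_succ k
    have hc : ((2*(k+1)).choose (k+1) : ℝ) * (k+1) = 2 * (2 * (k:ℝ) + 1) * ((2*k).choose k : ℝ) := by
      have := congrArg (fun n : ℕ => (n : ℝ)) hnat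
      push_cast [Nat.centralBinom] at this ⊢
      linarith
    have hk1 : ((k:ℝ)+1) ≠ 0 := by positivity
    have hC' : ((2*(k+1)).choose (k+1) : ℝ) = 2 * (2*(k:ℝ)+1) * ((2*k).choose k : ℝ) / (k+1) := by
      field_simp at hc ⊢
      linarith
    rw [hC']
    have h4k : (4:ℝ)^k ≠ 0 := by positivity
    field_simp
    ring

lemma cos_image : Real.cos '' Set.Ioo 0 π = Set.Ioo (-1 : ℝ) 1 := by
  ext y
  constructor
  · rintro ⟨t, ⟨ht0, htπ⟩, rfl⟩
    have hmem : t ∈ Set.Icc (0:ℝ) π := ⟨ht0.le, htπ.le⟩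
    constructor
    · have : Real.cos π < Real.cos t :=
        Real.strictAntiOn_cos hmem ⟨Real.pi_pos.le, le_refl π⟩ htπ
      simpa using this
    · have : Real.cos t < Real.cos 0 :=
        Real.strictAntiOn_cos ⟨le_refl 0, Real.pi_pos.le⟩ hmem ht0
      simpa using this
  · rintro ⟨h1, h2⟩
    refine ⟨Real.arccos y, ⟨?_, ?_⟩, Real.cos_arccos h1.le h2.le⟩
    · exact Real.arccos_pos.mpr h2
    · rcases lt_or_eq_of_le (Real.arccos_le_pi y) with h | h
      · exact h
      · exfalso
        have := Real.arccos_eq_pi.mp h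
        linarith

lemma step1 (m : ℕ) :
    gInt m (m+2) (m+2)
      = ∫ x in (-1:ℝ)..1,
          (1 - x^2)^m * (cA m * x^2 - cB m)^2 / Real.sqrt (1 - x^2) := by
  rw [gInt]
  apply intervalIntegral.integral_congr
  intro x hx
  rw [Set.uIcc_of_le (by norm_num : (-1:ℝ) ≤ 1)] at hx
  have ht : (0:ℝ) ≤ 1 - x^2 := by
    rcases hx with ⟨h1, h2⟩; nlinarith
  simp only [assocLegendreP, iterD]
  have hsq : ((1 - x^2) ^ ((m:ℝ)/2)) * ((1 - x^2) ^ ((m:ℝ)/2)) = (1 - x^2)^m := by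
    rw [← pow_two, ← Real.rpow_natCast ((1 - x^2) ^ ((m:ℝ)/2)) 2, ← Real.rpow_mul ht]
    norm_num
  have hneg : ((-1:ℝ)^m) * ((-1:ℝ)^m) = 1 := by
    rw [← pow_add, ← two_mul, pow_mul]; norm_num
  congr 1
  calc (-1:ℝ)^m * (1 - x^2) ^ ((m:ℝ)/2) * (cA m * x^2 - cB m) *
        ((-1:ℝ)^m * (1 - x^2) ^ ((m:ℝ)/2) * (cA m * x^2 - cB m))
      = (((-1:ℝ)^m) * ((-1:ℝ)^m)) * (((1 - x^2) ^ ((m:ℝ)/2)) * ((1 - x^2) ^ ((m:ℝ)/2))) *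
        ((cA m * x^2 - cB m) * (cA m * x^2 - cB m)) := by ring
    _ = (1 - x^2)^m * (cA m * x^2 - cB m)^2 := by rw [hsq, hneg]; ring

lemma step2 (m : ℕ) :
    (∫ x in (-1:ℝ)..1,
        (1 - x^2)^m * (cA m * x^2 - cB m)^2 / Real.sqrt (1 - x^2))
      = ∫ t in (0:ℝ)..π, Real.sin t ^ (2*m) * (cA m * Real.cos t ^2 - cB m)^2 := by
  rw [intervalIntegral.integral_of_le (by norm_num : (-1:ℝ) ≤ 1),
    MeasureTheory.integral_Ioc_eq_integral_Ioo, ← cos_image,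
    integral_image_eq_integral_abs_deriv_smul measurableSet_Ioo
      (fun t _ => (Real.hasDerivAt_cos t).hasDerivWithinAt)
      (Real.injOn_cos.mono Set.Ioo_subset_Icc_self)]
  rw [intervalIntegral.integral_of_le Real.pi_pos.le,
    MeasureTheory.integral_Ioc_eq_integral_Ioo]
  apply MeasureTheory.setIntegral_congr_fun measurableSet_Ioo
  intro t ht
  have hsin : 0 < Real.sin t := Real.sin_pos_of_pos_of_lt_pi ht.1 ht.2
  have h1 : 1 - Real.cos t ^ 2 = Real.sin t ^ 2 := by
    have := Real.sin_sq_add_cos_sq t; linarith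
  simp only [abs_neg, abs_of_pos hsin, smul_eq_mul, h1]
  rw [Real.sqrt_sq hsin.le, ← pow_mul]
  rw [mul_div_assoc']
  rw [mul_comm (Real.sin t) _, mul_div_assoc, div_self hsin.ne', mul_one]

lemma step3 (m : ℕ) :
    (∫ t in (0:ℝ)..π, Real.sin t ^ (2*m) * (cA m * Real.cos t ^2 - cB m)^2)
      = (cA m - cB m)^2 * (π * (((2*m).choose m : ℝ)/4^m))
        + 2*(cA m)*(cB m - cA m) * (π * (((2*(m+1)).choose (m+1) : ℝ)/4^(m+1)))
        + (cA m)^2 * (π * (((2*(m+2)).choose (m+2) : ℝ)/4^(m+2))) := by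
  have hcong : ∀ t : ℝ, Real.sin t ^ (2*m) * (cA m * Real.cos t ^2 - cB m)^2
      = (cA m - cB m)^2 * Real.sin t ^ (2*m)
        + 2*(cA m)*(cB m - cA m) * Real.sin t ^ (2*(m+1))
        + (cA m)^2 * Real.sin t ^ (2*(m+2)) := by
    intro t
    have h1 : Real.cos t ^ 2 = 1 - Real.sin t ^ 2 := Real.cos_sq' t
    rw [h1]
    have e1 : 2*(m+1) = 2*m + 2 := by ring
    have e2 : 2*(m+2) = 2*m + 4 := by ring
    rw [e1, e2, pow_add, pow_add]
    ring
  rw [intervalIntegral.integral_congr (g := fun t =>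
      (cA m - cB m)^2 * Real.sin t ^ (2*m)
        + 2*(cA m)*(cB m - cA m) * Real.sin t ^ (2*(m+1))
        + (cA m)^2 * Real.sin t ^ (2*(m+2))) (fun t _ => hcong t)]
  rw [intervalIntegral.integral_add (by apply Continuous.intervalIntegrable; fun_prop)
        (by apply Continuous.intervalIntegrable; fun_prop),
     intervalIntegral.integral_add (by apply Continuous.intervalIntegrable; fun_prop)
        (by apply Continuous.intervalIntegrable; fun_prop),
     intervalIntegral.integral_const_mul, intervalIntegral.integral_const_mul,
     intervalIntegral.integral_const_mul,
     integral_sin_pow_even, integral_sin_pow_even, integral_sin_pow_even,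
     prod_eq, prod_eq, prod_eq]

lemma final (m : ℕ) :
    (cA m - cB m)^2 * (π * (((2*m).choose m : ℝ)/4^m))
      + 2*(cA m)*(cB m - cA m) * (π * (((2*(m+1)).choose (m+1) : ℝ)/4^(m+1)))
      + (cA m)^2 * (π * (((2*(m+2)).choose (m+2) : ℝ)/4^(m+2)))
    = π * ((2*m+1).factorial : ℝ) / (2 * 4^(2*m+2)) *
        ((8*(m:ℝ)^2 + 20*m + 11)/(2*(m:ℝ)+3)) *
        ((2*m).choose m : ℝ) * ((2*m+3).choose (m+1) : ℝ) := by
  set n : ℝ := (m : ℝ) with hn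
  set t : ℝ := ((2*m).factorial : ℝ) with htdef
  set u : ℝ := (m.factorial : ℝ) with hudef
  set e : ℝ := (2:ℝ)^m with hedef
  have key : ∀ j : ℕ, ((j+1).factorial : ℝ) = (j+1) * j.factorial := by
    intro j; rw [Nat.factorial_succ]; push_cast; ring
  have hF1 : ((2*m+1).factorial : ℝ) = (2*n+1)*t := by
    rw [key (2*m)]; push_cast; ring
  have hF2 : ((2*m+2).factorial : ℝ) = (2*n+2)*((2*n+1)*t) := by
    rw [show 2*m+2 = (2*m+1)+1 by omega, key (2*m+1), hF1]; push_cast; ring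
  have hF3 : ((2*m+3).factorial : ℝ) = (2*n+3)*((2*n+2)*((2*n+1)*t)) := by
    rw [show 2*m+3 = (2*m+2)+1 by omega, key (2*m+2), hF2]; push_cast; ring
  have hF4 : ((2*m+4).factorial : ℝ) = (2*n+4)*((2*n+3)*((2*n+2)*((2*n+1)*t))) := by
    rw [show 2*m+4 = (2*m+3)+1 by omega, key (2*m+3), hF3]; push_cast; ring
  have hu1 : ((m+1).factorial : ℝ) = (n+1)*u := by
    rw [key m]
  have hu2 : ((m+2).factorial : ℝ) = (n+2)*((n+1)*u) := by
    rw [show m+2 = (m+1)+1 by omega, key (m+1), hu1]; push_cast; ring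
  have hupos : 0 < u := by rw [hudef]; exact_mod_cast Nat.factorial_pos m
  have htpos : 0 < t := by rw [htdef]; exact_mod_cast Nat.factorial_pos (2*m)
  have hepos : 0 < e := by positivity
  have hnpos : 0 ≤ n := by rw [hn]; positivity
  have hd : ((2*m+4).descFactorial (2*m+2) : ℝ)
      = (2*n+4)*((2*n+3)*((2*n+2)*((2*n+1)*t)))/2 := by
    have h := Nat.factorial_mul_descFactorial (show 2*m+2 ≤ 2*m+4 by omega)
    rw [show 2*m+4 - (2*m+2) = 2 by omega] at h
    rw [show Nat.factorial 2 = 2 from rfl] at h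
    have h2 : (2 : ℝ) * ((2*m+4).descFactorial (2*m+2) : ℝ)
        = ((2*m+4).factorial : ℝ) := by exact_mod_cast congrArg (fun k : ℕ => (k : ℝ)) h
    rw [hF4] at h2
    linarith
  have hc0 : ((2*m).choose m : ℝ) = t/(u*u) := by
    rw [Nat.cast_choose ℝ (show m ≤ 2*m by omega), show 2*m - m = m by omega]
  have hc1 : ((2*(m+1)).choose (m+1) : ℝ) = (2*n+2)*((2*n+1)*t)/(((n+1)*u)*((n+1)*u)) := by
    rw [Nat.cast_choose ℝ (show m+1 ≤ 2*(m+1) by omega),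
      show 2*(m+1) - (m+1) = m+1 by omega, show 2*(m+1) = 2*m+2 by omega, hF2, hu1]
  have hc2 : ((2*(m+2)).choose (m+2) : ℝ)
      = (2*n+4)*((2*n+3)*((2*n+2)*((2*n+1)*t)))/(((n+2)*((n+1)*u))*((n+2)*((n+1)*u))) := by
    rw [Nat.cast_choose ℝ (show m+2 ≤ 2*(m+2) by omega),
      show 2*(m+2) - (m+2) = m+2 by omega, show 2*(m+2) = 2*m+4 by omega, hF4, hu2]
  have hc3 : ((2*m+3).choose (m+1) : ℝ)
      = (2*n+3)*((2*n+2)*((2*n+1)*t))/(((n+1)*u)*((n+2)*((n+1)*u))) := by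
    rw [Nat.cast_choose ℝ (show m+1 ≤ 2*m+3 by omega),
      show 2*m+3 - (m+1) = m+2 by omega, hF3, hu1, hu2]
  have hcA : cA m = (2*n+4)*((2*n+3)*((2*n+2)*((2*n+1)*t)))/2 / (4*e*((n+2)*((n+1)*u))) := by
    rw [cA, hd, hu2, show m+2 = (m+1)+1 by omega, pow_succ, pow_succ]
    rw [← hedef]; ring_nf
  have hcB : cB m = ((n+2)*((2*n+2)*((2*n+1)*t))) / (4*e*((n+2)*((n+1)*u))) := by
    rw [cB]
    rw [hF2, hu2, show m+2 = (m+1)+1 by omega, pow_succ, pow_succ, ← hedef, ← hn]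
    ring_nf
  have h4m : (4:ℝ)^m = e*e := by
    rw [hedef, ← mul_pow]; norm_num
  have h4m1 : (4:ℝ)^(m+1) = 4*(e*e) := by rw [pow_succ, h4m]; ring
  have h4m2 : (4:ℝ)^(m+2) = 16*(e*e) := by
    rw [show m+2 = (m+1)+1 by omega, pow_succ, h4m1]; ring
  have h4big : (4:ℝ)^(2*m+2) = 16*(e*e)*(e*e) := by
    rw [show 2*m+2 = (m+1)+(m+1) by omega, pow_add, h4m1]; ring
  rw [hcA, hcB, hc0, hc1, hc2, hc3, hF1, h4m, h4m1, h4m2, h4big]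
  have h1 : (n+1) ≠ 0 := by positivity
  have h2 : (n+2) ≠ 0 := by positivity
  have h3 : (2*n+3) ≠ 0 := by positivity
  field_simp
  ring


end GIntAux

/-- For every `m ∈ ℕ`:
`g^m_{m+2,m+2} = (π(2m+1)!/(2·4^{2m+2}))·((8m²+20m+11)/(2m+3))·C(2m,m)·C(2m+3,m+1)`. -/
theorem gInt_diag_two (m : ℕ) :
    gInt m (m + 2) (m + 2)
      = Real.pi * (Nat.factorial (2 * m + 1) : ℝ) / (2 * 4 ^ (2 * m + 2)) *
          ((8 * (m : ℝ) ^ 2 + 20 * m + 11) / (2 * (m : ℝ) + 3)) *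
          (Nat.choose (2 * m) m : ℝ) * (Nat.choose (2 * m + 3) (m + 1) : ℝ) := by
  rw [GIntAux.step1, GIntAux.step2, GIntAux.step3, GIntAux.final]
end
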